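/- arXiv:2201.00678 — 3 statements merged into one kernel-verified Lean document; each statement's English description precedes it below -/
import Mathlib

section
/- Let C ⊆ ℝ^d be a convex body (compact, convex, with nonempty interior) and r > 0. Then the Lebesgue measure of the r-neighborhood of the boundary, |∂C ⊕ B(r)|, satisfies ∑_{j=0}^{d-1} ω_{d-j}·V_j(C)·r^{d-j} ≤ |∂C ⊕ B(r)| ≤ 2·∑_{j=0}^{d-1} ω_{d-j}·V_j(C)·r^{d-j}, where V_j(C) is the j-th intrinsic volume of C and ω_j is the volume of the j-dimensional unit ball. -/
open Filter MeasureTheory Pointwise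

section Aux

open Metric Set
open scoped InnerProductSpace NNReal ENNReal

variable {d : ℕ}

local notation "E" => EuclideanSpace ℝ (Fin d)

/-- A `1`-Lipschitz map does not increase Lebesgue measure. -/
lemma aux_volume_image_le (f : E → E) (hf : LipschitzWith 1 f) (s : Set E) :
    volume (f '' s) ≤ volume s := by
  have hvol : (volume : Measure E)
      = Measure.addHaarScalarFactor volume (μH[Module.finrank ℝ E]) • (μH[Module.finrank ℝ E]) :=
    Measure.isAddLeftInvariant_eq_smul _ _
  have him : μH[((Module.finrank ℝ E : ℕ) : ℝ)] (f '' s)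
      ≤ ((1 : ℝ≥0) : ℝ≥0∞) ^ ((Module.finrank ℝ E : ℕ) : ℝ)
          * μH[((Module.finrank ℝ E : ℕ) : ℝ)] s :=
    hf.hausdorffMeasure_image_le (Nat.cast_nonneg _) s
  rw [ENNReal.coe_one, ENNReal.one_rpow, one_mul] at him
  rw [hvol]
  simp only [Measure.smul_apply, smul_eq_mul]
  exact mul_le_mul_right him _

/-- Existence of the metric projection, with its variational characterization. -/
lemma aux_exists_proj {C : Set E} (hC : Convex ℝ C) (hcl : IsClosed C) (hne : C.Nonempty)
    (y : E) : ∃ q ∈ C, ∀ c ∈ C, ⟪y - q, c - q⟫_ℝ ≤ 0 := by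
  obtain ⟨v, hv, hmin⟩ := exists_norm_eq_iInf_of_complete_convex hne hcl.isComplete hC y
  exact ⟨v, hv, (norm_eq_iInf_iff_real_inner_le_zero hC hv).1 hmin⟩

/-- Uniqueness of points satisfying the variational inequality. -/
lemma aux_proj_unique {C : Set E} {y q₁ q₂ : E} (h₁ : q₁ ∈ C) (h₂ : q₂ ∈ C)
    (hv₁ : ∀ c ∈ C, ⟪y - q₁, c - q₁⟫_ℝ ≤ 0) (hv₂ : ∀ c ∈ C, ⟪y - q₂, c - q₂⟫_ℝ ≤ 0) :
    q₁ = q₂ := by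
  have ha := hv₁ q₂ h₂
  have hb := hv₂ q₁ h₁
  have e : ⟪q₂ - q₁, q₂ - q₁⟫_ℝ ≤ 0 := by
    have e1 : (y - q₂) = (y - q₁) - (q₂ - q₁) := by abel
    have e2 : q₁ - q₂ = -(q₂ - q₁) := by abel
    rw [e1, e2, inner_sub_left, inner_neg_right, inner_neg_right] at hb
    linarith
  have h0 := real_inner_self_nonpos.1 e
  exact (sub_eq_zero.1 h0).symm

/-- The reflection through the metric projection is 1-Lipschitz. -/
lemma aux_lipschitz_reflection {C : Set E} (P : E → E) (hmem : ∀ y, P y ∈ C)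
    (hvar : ∀ y, ∀ c ∈ C, ⟪y - P y, c - P y⟫_ℝ ≤ 0) :
    LipschitzWith 1 (fun y => (2:ℝ) • P y - y) := by
  refine LipschitzWith.of_dist_le_mul fun x y => ?_
  rw [NNReal.coe_one, one_mul]
  simp only [dist_eq_norm]
  set a := P x - P y with ha
  set b := x - y with hb
  have h1 := hvar x (P y) (hmem y)
  have h2 : ⟪y - P y, a⟫_ℝ ≤ 0 := hvar y (P x) (hmem x)
  have key : ⟪a, a⟫_ℝ ≤ ⟪b, a⟫_ℝ := by
    have e1 : (x - P x) = b - a + (y - P y) := by rw [ha, hb]; abel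
    have e2 : P y - P x = -a := by rw [ha]; abel
    rw [e1, e2, inner_add_left, inner_sub_left, inner_neg_right, inner_neg_right,
      inner_neg_right] at h1
    linarith
  have expand : ‖(2:ℝ) • a - b‖^2 = 4*⟪a,a⟫_ℝ - 4*⟪b,a⟫_ℝ + ‖b‖^2 := by
    have hn : ‖(2:ℝ) • a‖^2 = 4 * ⟪a,a⟫_ℝ := by
      rw [norm_smul, real_inner_self_eq_norm_sq, Real.norm_ofNat]; ring
    rw [norm_sub_sq_real, hn, real_inner_smul_left, real_inner_comm a b]; ring
  have hfinal : ‖(2:ℝ) • a - b‖^2 ≤ ‖b‖^2 := by rw [expand]; linarith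
  have hgoal : ((2:ℝ) • P x - x) - ((2:ℝ) • P y - y) = (2:ℝ) • a - b := by
    rw [ha, hb, smul_sub]; abel
  rw [hgoal]
  have := Real.sqrt_le_sqrt hfinal
  rwa [Real.sqrt_sq (norm_nonneg _), Real.sqrt_sq (norm_nonneg _)] at this

/-- Any segment from a point of `C` to a point outside `C` meets the frontier. -/
lemma aux_crossing {C : Set E} {c x : E} (hc : c ∈ C) (hx : x ∉ C) :
    ∃ q ∈ frontier C, q ∈ segment ℝ c x := by
  by_contra h
  push_neg at h
  have hsub : segment ℝ c x ⊆ interior C ∪ (closure C)ᶜ := by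
    intro w hw
    by_cases h1 : w ∈ interior C
    · exact Or.inl h1
    · refine Or.inr fun h2 => h w ⟨h2, h1⟩ hw
  rcases (convex_segment c x).isPreconnected.subset_or_subset isOpen_interior
      isClosed_closure.isOpen_compl
      (disjoint_compl_right.mono_left interior_subset_closure) hsub with hs | hs
  · exact hx (interior_subset (hs (right_mem_segment ℝ c x)))
  · exact hs (left_mem_segment ℝ c x) (subset_closure hc)

/-- The nearest frontier point to an interior point, with outward normal property. -/
lemma aux_exists_reflect {C : Set E} (hconv : Convex ℝ C) (hcomp : IsCompact C)
    {z p : E} (hz : z ∈ interior C) (hp : p ∈ frontier C) :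
    ∃ q ∈ frontier C, (∀ c ∈ C, ⟪q - z, c - q⟫_ℝ ≤ 0) ∧ dist z q ≤ dist z p ∧ z ≠ q := by
  have hCcl := hcomp.isClosed
  have hFcomp : IsCompact (frontier C) :=
    hcomp.of_isClosed_subset isClosed_frontier hCcl.frontier_subset
  obtain ⟨q, hqF, hq⟩ := hFcomp.exists_infDist_eq_dist ⟨p, hp⟩ z
  have hqni : q ∉ interior C := fun h => hqF.2 h
  have hzq : z ≠ q := fun h => hqni (h ▸ hz)
  have htpos : 0 < dist z q := dist_pos.2 hzq
  set t := dist z q with ht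
  have hmin : ∀ w ∈ frontier C, t ≤ dist z w := fun w hw => by
    rw [← hq]; exact infDist_le_dist_of_mem hw
  have hnormqz : ‖q - z‖ = t := by rw [ht, dist_comm, dist_eq_norm]
  -- the open ball of radius `t` around `z` is inside the interior
  have hball : Metric.ball z t ⊆ interior C := by
    have hsub : Metric.ball z t ⊆ interior C ∪ (closure C)ᶜ := by
      intro w hw
      by_cases h1 : w ∈ interior C
      · exact Or.inl h1
      · refine Or.inr fun h2 => ?_
        have := hmin w ⟨h2, h1⟩
        rw [Metric.mem_ball, dist_comm] at hw
        linarith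
    rcases (convex_ball z t).isPreconnected.subset_or_subset isOpen_interior
        isClosed_closure.isOpen_compl
        (disjoint_compl_right.mono_left interior_subset_closure) hsub with hs | hs
    · exact hs
    · exact absurd (hs (Metric.mem_ball_self htpos))
        (not_not_intro (subset_closure (interior_subset hz)))
  have hcball : Metric.closedBall z t ⊆ C := by
    rw [← closure_ball z htpos.ne']
    exact (closure_mono hball).trans
      ((closure_mono interior_subset).trans hCcl.closure_eq.subset)
  have hdlep : dist z q ≤ dist z p := by
    have h6 := Metric.infDist_le_dist_of_mem (x := z) hp
    rw [hq, ht] at h6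
    exact h6
  refine ⟨q, hqF, ?_, hdlep, hzq⟩
  intro c hc
  by_contra hβ
  push_neg at hβ
  set β := ⟪q - z, c - q⟫_ℝ with hβdef
  set w := c - z with hw
  set W := ‖w‖^2 with hWdef
  have hWnn : 0 ≤ W := sq_nonneg _
  set ε := β / (W + β + 1) with hε
  have hden : 0 < W + β + 1 := by linarith
  have hεpos : 0 < ε := div_pos hβ hden
  have hεlt : ε < 1 := by rw [hε, div_lt_one hden]; linarith
  have hεW : ε * (W + β + 1) = β := div_mul_cancel₀ β hden.ne'
  have hkey : ε * W < 2*β + ε * t^2 := by nlinarith [mul_nonneg hεpos.le (sq_nonneg t)]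
  set center := z + ε • w with hcenter
  have hqc : dist q center < (1-ε)*t := by
    rw [dist_eq_norm]
    have hrepr : q - center = (q - z) - ε • w := by rw [hcenter, sub_add_eq_sub_sub]
    have hiw : ⟪q - z, w⟫_ℝ = β + t^2 := by
      have e : w = (c - q) + (q - z) := by rw [hw]; abel
      rw [e, inner_add_right, real_inner_self_eq_norm_sq, hnormqz, hβdef]
    have hsq : ‖(q - z) - ε • w‖^2 = t^2 - 2*ε*(β + t^2) + ε^2*W := by
      rw [norm_sub_sq_real, real_inner_smul_right, hiw, hnormqz, norm_smul, hWdef]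
      rw [Real.norm_eq_abs, abs_of_pos hεpos, mul_pow]
      ring
    have hlt : t^2 - 2*ε*(β + t^2) + ε^2*W < ((1-ε)*t)^2 := by
      nlinarith [mul_lt_mul_of_pos_left hkey hεpos]
    have hnn : 0 ≤ (1-ε)*t := mul_nonneg (by linarith) htpos.le
    refine lt_of_pow_lt_pow_left₀ 2 hnn ?_
    rw [hrepr, hsq]
    exact hlt
  have hsubC : Metric.ball center ((1-ε)*t) ⊆ C := by
    intro x hx
    have h1ε : (1:ℝ) - ε ≠ 0 := by linarith
    have hrep : x = (1-ε) • ((1-ε)⁻¹ • (x - ε • c)) + ε • c := by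
      rw [smul_inv_smul₀ h1ε]; abel
    have hkey2 : x - ε • c - (1-ε) • z = x - center := by
      rw [hcenter, hw, smul_sub, sub_smul, one_smul]; abel
    have hmem2 : (1-ε)⁻¹ • (x - ε • c) ∈ Metric.closedBall z t := by
      rw [Metric.mem_closedBall, dist_eq_norm]
      have e : (1-ε)⁻¹ • (x - ε • c) - z = (1-ε)⁻¹ • (x - ε • c - (1-ε) • z) := by
        match_scalars <;> field_simp
      rw [e, hkey2, norm_smul, Real.norm_eq_abs, abs_of_pos (by
        rw [inv_pos]; linarith : (0:ℝ) < (1-ε)⁻¹)]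
      have hxlt : ‖x - center‖ ≤ (1-ε)*t := by
        rw [Metric.mem_ball, dist_eq_norm] at hx
        exact hx.le
      calc (1-ε)⁻¹ * ‖x - center‖ ≤ (1-ε)⁻¹ * ((1-ε)*t) := by
            apply mul_le_mul_of_nonneg_left hxlt
            rw [inv_nonneg]; linarith
        _ = t := by field_simp
    rw [hrep]
    exact hconv (hcball hmem2) hc (by linarith) hεpos.le (by ring)
  exact hqni (interior_maximal hsubC Metric.isOpen_ball (Metric.mem_ball.2 hqc))

end Aux

theorem boundary_tube_volume_bounds
    (d : ℕ) (C : Set (EuclideanSpace ℝ (Fin d)))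
    (hconv : Convex ℝ C) (hcomp : IsCompact C) (hint : (interior C).Nonempty)
    (V ω : ℕ → ℝ) (hVnn : ∀ j, 0 ≤ V j)
    (hVd : V d = (volume C).toReal)
    (hω : ∀ j, ω j = (volume (Metric.ball (0 : EuclideanSpace ℝ (Fin j)) 1)).toReal)
    (hSteiner : ∀ r : ℝ, 0 ≤ r →
      (volume (C + Metric.closedBall (0 : EuclideanSpace ℝ (Fin d)) r)).toReal
        = ∑ j ∈ Finset.range (d + 1), ω (d - j) * V j * r ^ (d - j))
    (r : ℝ) (hr : 0 < r) :
    ∑ j ∈ Finset.range d, ω (d - j) * V j * r ^ (d - j)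
      ≤ (volume (frontier C + Metric.closedBall (0 : EuclideanSpace ℝ (Fin d)) r)).toReal ∧
    (volume (frontier C + Metric.closedBall (0 : EuclideanSpace ℝ (Fin d)) r)).toReal
      ≤ 2 * ∑ j ∈ Finset.range d, ω (d - j) * V j * r ^ (d - j) := by
  classical
  have hCcl : IsClosed C := hcomp.isClosed
  have hCne : C.Nonempty := hint.mono interior_subset
  set B := Metric.closedBall (0 : EuclideanSpace ℝ (Fin d)) r with hB
  have hBcomp : IsCompact B := isCompact_closedBall _ _
  set X := C + B with hX
  set T := frontier C + B with hT
  have hXcomp : IsCompact X := hcomp.add hBcomp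
  have hFsub : frontier C ⊆ C := hCcl.frontier_subset
  have hFcomp : IsCompact (frontier C) := hcomp.of_isClosed_subset isClosed_frontier hFsub
  have hTcomp : IsCompact T := hFcomp.add hBcomp
  have hCX : C ⊆ X := fun c hc =>
    Set.mem_add.2 ⟨c, hc, 0, by simp [hB, hr.le], add_zero c⟩
  have hXfin : volume X ≠ ⊤ := hXcomp.measure_lt_top.ne
  have hCfin : volume C ≠ ⊤ := hcomp.measure_lt_top.ne
  have hTfin : volume T ≠ ⊤ := hTcomp.measure_lt_top.ne
  -- ω 0 = 1
  have hω0 : ω 0 = 1 := by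
    rw [hω 0]
    have hballuniv : (Metric.ball (0 : EuclideanSpace ℝ (Fin 0)) 1) = Set.univ := by
      apply Set.eq_univ_of_forall
      intro x
      have hx0 : x = 0 := by ext i; exact i.elim0
      simp [hx0]
    rw [hballuniv]
    have h2 : volume (Set.univ : Set (EuclideanSpace ℝ (Fin 0))) = 1 := by
      have h3 := (EuclideanSpace.volume_preserving_symm_measurableEquiv_toLp (Fin 0)).measure_preimage
        (MeasurableSet.univ.nullMeasurableSet (μ := volume))
      simpa [MeasureTheory.volume_pi, MeasureTheory.Measure.pi_univ] using h3
    rw [h2]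
    simp
  -- Steiner sum split
  have hsplit : (volume X).toReal
      = (∑ j ∈ Finset.range d, ω (d - j) * V j * r ^ (d - j)) + (volume C).toReal := by
    rw [hX, hSteiner r hr.le, Finset.sum_range_succ, Nat.sub_self, pow_zero, mul_one, hω0,
      one_mul, hVd]
  -- Lower bound : X ⊆ C ∪ T
  have hXsub : X ⊆ C ∪ T := by
    intro x hx
    by_cases hxC : x ∈ C
    · exact Or.inl hxC
    · right
      rw [hX, Set.mem_add] at hx
      obtain ⟨c, hc, b, hb, rfl⟩ := hx
      obtain ⟨q, hqF, hqseg⟩ := aux_crossing hc hxC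
      obtain ⟨α, β, hα, hβ, hαβ, hqeq⟩ := hqseg
      have hdiff : (c + b) - q = α • b := by
        rw [← hqeq, smul_add]
        have : α • c + β • c = c := by
          rw [← add_smul, hαβ, one_smul]
        calc c + b - (α • c + (β • c + β • b)) = (c - (α • c + β • c)) + (b - β • b) := by abel
          _ = b - β • b := by rw [this]; abel
          _ = (1 - β) • b := by rw [sub_smul, one_smul]
          _ = α • b := by rw [show (1:ℝ) - β = α by linarith]
      have hbr : ‖b‖ ≤ r := by rwa [hB, mem_closedBall_zero_iff] at hb
      have hnorm : ‖(c + b) - q‖ ≤ r := by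
        rw [hdiff, norm_smul, Real.norm_eq_abs, abs_of_nonneg hα]
        nlinarith [norm_nonneg b]
      exact Set.mem_add.2 ⟨q, hqF, (c + b) - q, mem_closedBall_zero_iff.2 hnorm, by abel⟩
  have h1 : (volume X).toReal ≤ (volume C).toReal + (volume T).toReal := by
    rw [← ENNReal.toReal_add hCfin hTfin]
    exact ENNReal.toReal_mono (ENNReal.add_ne_top.2 ⟨hCfin, hTfin⟩)
      ((measure_mono hXsub).trans (measure_union_le _ _))
  -- Upper bound machinery
  have hex : ∀ y : EuclideanSpace ℝ (Fin d), ∃ q ∈ C, ∀ c ∈ C, (inner ℝ (y - q) (c - q) : ℝ) ≤ 0 :=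
    fun y => aux_exists_proj hconv hCcl hCne y
  choose P hPmem hPvar using hex
  set ψ : EuclideanSpace ℝ (Fin d) → EuclideanSpace ℝ (Fin d) := fun y => (2:ℝ) • P y - y with hψ
  have hlip : LipschitzWith 1 ψ := aux_lipschitz_reflection P hPmem hPvar
  set Shell := X \ interior C with hShellDef
  have hcover : T ⊆ Shell ∪ ψ '' Shell := by
    intro x hx
    rw [hT, Set.mem_add] at hx
    obtain ⟨p, hp, b, hb, rfl⟩ := hx
    have hbr : ‖b‖ ≤ r := by rwa [hB, mem_closedBall_zero_iff] at hb
    have hxX : p + b ∈ X := Set.mem_add.2 ⟨p, hFsub hp, b, hb, rfl⟩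
    by_cases hxi : (p + b) ∈ interior C
    · right
      obtain ⟨q, hqF, hvarq, hdle, hzq⟩ := aux_exists_reflect hconv hcomp hxi hp
      set y := q + (q - (p + b)) with hy
      have hyq : y - q = q - (p + b) := by rw [hy]; abel
      have hdzq : ‖q - (p + b)‖ ≤ r := by
        have h4 : dist (p + b) p = ‖b‖ := by
          rw [dist_eq_norm]; congr 1; abel
        have := hdle.trans (le_of_eq h4)
        rw [dist_eq_norm, norm_sub_rev] at this
        linarith
      have hyX : y ∈ X := Set.mem_add.2
        ⟨q, hFsub hqF, q - (p + b), mem_closedBall_zero_iff.2 hdzq, by rw [hy]⟩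
      have hynotC : y ∉ C := by
        intro hyC
        have := hvarq y hyC
        rw [hyq] at this
        have hq0 : q - (p + b) = 0 := real_inner_self_nonpos.1 this
        exact hzq (by rw [sub_eq_zero] at hq0; exact hq0.symm)
      have hyShell : y ∈ Shell := ⟨hyX, fun h => hynotC (interior_subset h)⟩
      refine ⟨y, hyShell, ?_⟩
      have hPy : P y = q :=
        aux_proj_unique (hPmem y) (hFsub hqF) (hPvar y)
          (fun c hc => by rw [hyq]; exact hvarq c hc)
      show (2:ℝ) • P y - y = p + b
      rw [hPy, hy, two_smul]
      abel
    · exact Or.inl ⟨hxX, hxi⟩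
  -- measure computations
  have hIntEq : volume (interior C) = volume C := by
    apply le_antisymm (measure_mono interior_subset)
    have hsub2 : C ⊆ interior C ∪ frontier C := by
      intro x hx
      by_cases h : x ∈ interior C
      · exact Or.inl h
      · exact Or.inr ⟨subset_closure hx, h⟩
    calc volume C ≤ volume (interior C) + volume (frontier C) :=
          (measure_mono hsub2).trans (measure_union_le _ _)
      _ = volume (interior C) := by rw [hconv.addHaar_frontier volume, add_zero]
  have hIsubX : interior C ⊆ X := interior_subset.trans hCX
  have hShellVol : volume Shell = volume X - volume C := by
    rw [hShellDef, measure_diff hIsubX isOpen_interior.measurableSet.nullMeasurableSet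
      (by rw [hIntEq]; exact hCfin), hIntEq]
  have hShfin : volume Shell ≠ ⊤ :=
    ne_top_of_le_ne_top hXfin (measure_mono Set.diff_subset)
  have hup : volume T ≤ 2 * volume Shell := by
    calc volume T ≤ volume (Shell ∪ ψ '' Shell) := measure_mono hcover
      _ ≤ volume Shell + volume (ψ '' Shell) := measure_union_le _ _
      _ ≤ volume Shell + volume Shell :=
          add_le_add_right (aux_volume_image_le ψ hlip Shell) _
      _ = 2 * volume Shell := (two_mul _).symm
  have hShellReal : (volume Shell).toReal = (volume X).toReal - (volume C).toReal := by
    rw [hShellVol, ENNReal.toReal_sub_of_le (measure_mono hCX) hXfin]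
  have h2 : (volume T).toReal ≤ 2 * (volume Shell).toReal := by
    have h5 := ENNReal.toReal_mono
      (by exact ENNReal.mul_ne_top (by simp) hShfin) hup
    rwa [ENNReal.toReal_mul, ENNReal.toReal_ofNat] at h5
  constructor
  · linarith
  · linarith
end

section
/- Let g : [0,∞) → [0,∞) be decreasing with ∫₀^∞ g(x)^α·x^{d-1} dx < ∞ for some α > 0. For L > 0 let C_L(0) = [0,L]^d be the cube of side length L. Then ∫_{(C_L(0))^c} sup_{v ∈ C_L(0)} g(|v-u|)^α du = o(L^d) as L → ∞. -/
open Filter MeasureTheory Set Metric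

namespace CubeLittleO

noncomputable section

/-- coordinate distance bound in Euclidean space -/
lemma coord_le_dist {d : ℕ} (x y : EuclideanSpace ℝ (Fin d)) (i : Fin d) :
    dist (x i) (y i) ≤ dist x y := by
  rw [EuclideanSpace.dist_eq]
  have h1 : dist (x i) (y i) = Real.sqrt (dist (x i) (y i) ^ 2) := by
    rw [Real.sqrt_sq dist_nonneg]
  rw [h1]
  apply Real.sqrt_le_sqrt
  exact Finset.single_le_sum (f := fun j => dist (x j) (y j) ^ 2)
    (fun j _ => sq_nonneg _) (Finset.mem_univ i)

lemma coordSet_eq {d : ℕ} (s : Fin d → Set ℝ) :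
    {u : EuclideanSpace ℝ (Fin d) | ∀ i, u i ∈ s i}
      = (MeasurableEquiv.toLp 2 (Fin d → ℝ)).symm ⁻¹' (Set.univ.pi s) := by
  ext u
  simp only [Set.mem_preimage, Set.mem_univ_pi, Set.mem_setOf_eq]
  rfl

lemma measurableSet_coordSet {d : ℕ} (s : Fin d → Set ℝ) (hs : ∀ i, MeasurableSet (s i)) :
    MeasurableSet {u : EuclideanSpace ℝ (Fin d) | ∀ i, u i ∈ s i} := by
  rw [coordSet_eq]
  exact (MeasurableEquiv.toLp 2 (Fin d → ℝ)).symm.measurable (MeasurableSet.univ_pi hs)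

lemma vol_coordSet {d : ℕ} (s : Fin d → Set ℝ) (hs : ∀ i, MeasurableSet (s i)) :
    volume {u : EuclideanSpace ℝ (Fin d) | ∀ i, u i ∈ s i} = ∏ i, volume (s i) := by
  rw [coordSet_eq]
  rw [(EuclideanSpace.volume_preserving_symm_measurableEquiv_toLp (Fin d)).measure_preimage
      (MeasurableSet.univ_pi hs).nullMeasurableSet]
  exact volume_pi_pi s

lemma pow_sub_pow_le (n : ℕ) {a b : ℝ} (hb : 0 ≤ b) (hba : b ≤ a) :
    a ^ n - b ^ n ≤ n * ((a - b) * a ^ (n - 1)) := by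
  rw [← geom_sum₂_mul a b n]
  have ha : 0 ≤ a := hb.trans hba
  have hsum : (∑ i ∈ Finset.range n, a ^ i * b ^ (n - 1 - i)) ≤ n * a ^ (n - 1) := by
    calc (∑ i ∈ Finset.range n, a ^ i * b ^ (n - 1 - i))
        ≤ ∑ _i ∈ Finset.range n, a ^ (n - 1) := by
          apply Finset.sum_le_sum
          intro i hi
          have hin : i + (n - 1 - i) = n - 1 := by
            have := Finset.mem_range.mp hi; omega
          calc a ^ i * b ^ (n - 1 - i) ≤ a ^ i * a ^ (n - 1 - i) := by
                exact mul_le_mul_of_nonneg_left (pow_le_pow_left₀ hb hba _) (pow_nonneg ha _)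
            _ = a ^ (n - 1) := by rw [← pow_add, hin]
      _ = n * a ^ (n - 1) := by rw [Finset.sum_const, Finset.card_range, nsmul_eq_mul]
  have hab : 0 ≤ a - b := by linarith
  calc (∑ i ∈ Finset.range n, a ^ i * b ^ (n - 1 - i)) * (a - b)
      ≤ (n * a ^ (n - 1)) * (a - b) := mul_le_mul_of_nonneg_right hsum hab
    _ = n * ((a - b) * a ^ (n - 1)) := by ring

lemma iUnion_Ico_steps (b : ℝ) {c : ℝ} (hc : 0 < c) :
    (⋃ n : ℕ, Set.Ico (b + n * c) (b + (n + 1) * c)) = Set.Ici b := by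
  ext x
  simp only [Set.mem_iUnion, Set.mem_Ico, Set.mem_Ici]
  constructor
  · rintro ⟨n, h1, -⟩
    have : (0:ℝ) ≤ n * c := mul_nonneg n.cast_nonneg hc.le
    linarith
  · intro hx
    refine ⟨⌊(x - b) / c⌋₊, ?_, ?_⟩
    · have h1 : (⌊(x - b) / c⌋₊ : ℝ) ≤ (x - b) / c :=
        Nat.floor_le (div_nonneg (by linarith) hc.le)
      have h2 : (⌊(x - b) / c⌋₊ : ℝ) * c ≤ (x - b) / c * c :=
        mul_le_mul_of_nonneg_right h1 hc.le
      rw [div_mul_cancel₀ _ hc.ne'] at h2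
      linarith
    · have h2 : (x - b) / c < ⌊(x - b) / c⌋₊ + 1 := Nat.lt_floor_add_one _
      have h3 : (x - b) / c * c < ((⌊(x - b) / c⌋₊ : ℝ) + 1) * c :=
        mul_lt_mul_of_pos_right h2 hc
      rw [div_mul_cancel₀ _ hc.ne'] at h3
      linarith

lemma pairwise_disjoint_Ico_steps (b : ℝ) {c : ℝ} (hc : 0 ≤ c) :
    Pairwise (Function.onFun Disjoint fun n : ℕ => Set.Ico (b + n * c) (b + (n + 1) * c)) := by
  intro m n hmn
  wlog h : m < n generalizing m n
  · exact (this hmn.symm (hmn.lt_or_gt.resolve_left h)).symm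
  apply Set.disjoint_left.mpr
  rintro x ⟨-, hx2⟩ ⟨hx3, -⟩
  have hmn' : (m:ℝ) + 1 ≤ n := by exact_mod_cast h
  nlinarith





def cube (d : ℕ) (L : ℝ) : Set (EuclideanSpace ℝ (Fin d)) := {v | ∀ i, v i ∈ Set.Icc 0 L}

variable {d : ℕ}

lemma cube_measurableSet (L : ℝ) : MeasurableSet (cube d L) :=
  measurableSet_coordSet _ (fun _ => measurableSet_Icc)

lemma cube_nonempty {L : ℝ} (hL : 0 ≤ L) : (cube d L).Nonempty :=
  ⟨0, fun i => by simp only [cube]; exact ⟨le_refl _, hL⟩⟩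

lemma continuous_coord (i : Fin d) : Continuous fun u : EuclideanSpace ℝ (Fin d) => u i := by
  apply (LipschitzWith.of_dist_le_mul (K := 1) fun x y => ?_).continuous
  simpa using coord_le_dist x y i

lemma cube_isCompact {L : ℝ} (hL : 0 ≤ L) : IsCompact (cube d L) := by
  apply Metric.isCompact_of_isClosed_isBounded
  · have : cube d L = ⋂ i, (fun u : EuclideanSpace ℝ (Fin d) => u i) ⁻¹' (Set.Icc 0 L) := by
      ext u; simp [cube, Set.mem_iInter]
    rw [this]
    exact isClosed_iInter fun i => isClosed_Icc.preimage (continuous_coord i)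
  · refine (Metric.isBounded_closedBall (x := (0 : EuclideanSpace ℝ (Fin d)))
      (r := Real.sqrt (d * L ^ 2))).subset ?_
    intro u hu
    rw [Metric.mem_closedBall, EuclideanSpace.dist_eq]
    have key : ∑ i, dist (u i) ((0 : EuclideanSpace ℝ (Fin d)) i) ^ 2 ≤ d * L ^ 2 := by
      calc ∑ i, dist (u i) ((0 : EuclideanSpace ℝ (Fin d)) i) ^ 2
          ≤ ∑ _i : Fin d, L ^ 2 := by
            apply Finset.sum_le_sum; intro i _
            have h1 := (hu i).1
            have h2 := (hu i).2
            have h3 : dist (u i) ((0 : EuclideanSpace ℝ (Fin d)) i) = |u i| := by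
              show dist (u i) (0 : ℝ) = _
              rw [Real.dist_eq, sub_zero]
            rw [h3, abs_of_nonneg h1]
            exact pow_le_pow_left₀ h1 h2 2
        _ = d * L ^ 2 := by
            rw [Finset.sum_const, Finset.card_univ, Fintype.card_fin, nsmul_eq_mul]
    exact Real.sqrt_le_sqrt key

lemma sup_eq {α : ℝ} (hα : 0 < α) {g : ℝ → ℝ} (hg0 : ∀ x, 0 ≤ g x) (hgm : Antitone g)
    {L : ℝ} (hL : 0 ≤ L) (u : EuclideanSpace ℝ (Fin d)) :
    (⨆ v ∈ cube d L, g (dist v u) ^ α) = g (Metric.infDist u (cube d L)) ^ α := by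
  obtain ⟨v₀, hv₀C, hv₀d⟩ := (cube_isCompact hL).exists_infDist_eq_dist (cube_nonempty hL) u
  apply le_antisymm
  · apply Real.iSup_le _ (Real.rpow_nonneg (hg0 _) _)
    intro v
    apply Real.iSup_le _ (Real.rpow_nonneg (hg0 _) _)
    intro hv
    have h1 : Metric.infDist u (cube d L) ≤ dist v u := by
      rw [dist_comm]; exact Metric.infDist_le_dist_of_mem hv
    exact Real.rpow_le_rpow (hg0 _) (hgm h1) hα.le
  · have hb : BddAbove (Set.range fun v => ⨆ _ : v ∈ cube d L, g (dist v u) ^ α) := by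
      refine ⟨g 0 ^ α, ?_⟩
      rintro x ⟨v, rfl⟩
      apply Real.iSup_le _ (Real.rpow_nonneg (hg0 _) _)
      intro _
      exact Real.rpow_le_rpow (hg0 _) (hgm dist_nonneg) hα.le
    have h2 := le_ciSup hb v₀
    rw [ciSup_pos hv₀C] at h2
    rw [hv₀d, dist_comm]
    exact h2

lemma integral_eq {α : ℝ} (hα : 0 < α) {g : ℝ → ℝ} (hg0 : ∀ x, 0 ≤ g x) (hgm : Antitone g)
    {L : ℝ} (hL : 0 ≤ L) :
    (∫ u in (cube d L)ᶜ, ⨆ v ∈ cube d L, g (dist v u) ^ α)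
      = (∫⁻ u in (cube d L)ᶜ,
          ENNReal.ofReal (g (Metric.infDist u (cube d L)) ^ α)).toReal := by
  rw [integral_congr_ae (Filter.Eventually.of_forall fun u => sup_eq hα hg0 hgm hL u)]
  exact integral_eq_lintegral_of_nonneg_ae
    (Filter.Eventually.of_forall fun u => Real.rpow_nonneg (hg0 _) _)
    (((hgm.measurable.comp (Metric.continuous_infDist_pt (cube d L)).measurable).pow
      measurable_const).aestronglyMeasurable)

lemma caseA {α : ℝ} (hα : 0 < α) {g : ℝ → ℝ} (hg0 : ∀ x, 0 ≤ g x)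
    (hgm : Antitone g) {L : ℝ} (hL : 1 ≤ L) :
    (∫⁻ u in (cube d L)ᶜ, ENNReal.ofReal (g (Metric.infDist u (cube d L)) ^ α))
      ≤ ENNReal.ofReal (2 * d * (L + 2) ^ (d - 1))
        * ∑' n : ℕ, ENNReal.ofReal (g n ^ α * ((n : ℝ) + 1) ^ (d - 1)) := by
  have hL0 : (0:ℝ) ≤ L := by linarith
  set B : ℕ → Set (EuclideanSpace ℝ (Fin d)) :=
    fun n => {u | ∀ i, u i ∈ Set.Icc (-(n:ℝ)) (L + n)} with hB
  have hBmeas : ∀ n, MeasurableSet (B n) :=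
    fun n => measurableSet_coordSet _ fun _ => measurableSet_Icc
  have hBvol : ∀ n : ℕ, volume (B n) = ENNReal.ofReal ((L + 2 * n) ^ d) := by
    intro n
    rw [hB]
    rw [vol_coordSet _ fun _ => measurableSet_Icc]
    simp only [Real.volume_Icc]
    rw [Finset.prod_const, Finset.card_univ, Fintype.card_fin,
      show L + (n:ℝ) - -(n:ℝ) = L + 2*n from by ring,
      ENNReal.ofReal_pow (by positivity)]
  have hBmono : ∀ m n : ℕ, m ≤ n → B m ⊆ B n := by
    intro m n hmn u hu i
    have h := hu i
    have hc : (m:ℝ) ≤ n := by exact_mod_cast hmn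
    exact ⟨by linarith [h.1], by linarith [h.2]⟩
  have hB0 : B 0 = cube d L := by
    ext u
    simp [hB, cube]
  set A : ℕ → Set (EuclideanSpace ℝ (Fin d)) := fun n => B (n+1) \ B n with hA
  have hAmeas : ∀ n, MeasurableSet (A n) := fun n => (hBmeas _).diff (hBmeas _)
  have hApd : Pairwise (Function.onFun Disjoint A) := by
    intro m n hmn
    wlog h : m < n generalizing m n
    · exact (this hmn.symm (hmn.lt_or_gt.resolve_left h)).symm
    apply Set.disjoint_left.mpr
    rintro x ⟨hx1, -⟩ ⟨-, hx2⟩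
    exact hx2 (hBmono _ _ (by omega) hx1)
  have hAu : (⋃ n, A n) = (cube d L)ᶜ := by
    ext u
    simp only [Set.mem_iUnion, Set.mem_compl_iff, hA, Set.mem_diff]
    constructor
    · rintro ⟨n, hn1, hn2⟩ hC
      exact hn2 (hBmono 0 n (Nat.zero_le n) (hB0 ▸ hC))
    · intro hu
      have hex : ∃ k : ℕ, u ∈ B k := by
        refine ⟨⌈dist u 0⌉₊, fun i => ?_⟩
        have h1 : |u i| ≤ dist u 0 := by
          have h2 := coord_le_dist u 0 i
          have h0 : dist (u i) ((0 : EuclideanSpace ℝ (Fin d)) i) = |u i| := by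
            show dist (u i) (0:ℝ) = _
            rw [Real.dist_eq, sub_zero]
          rwa [h0] at h2
        have h2 : dist u 0 ≤ ⌈dist u 0⌉₊ := Nat.le_ceil _
        have h3 := abs_le.mp (h1.trans h2)
        exact ⟨h3.1, by linarith [h3.2]⟩
      have hn : u ∈ B (Nat.find hex) := Nat.find_spec hex
      rcases hfind : Nat.find hex with _ | m
      · rw [hfind] at hn
        rw [← hB0] at hu
        exact absurd hn hu
      · rw [hfind] at hn
        exact ⟨m, hn, Nat.find_min hex (by omega)⟩
  have hshell : ∀ n : ℕ, (∫⁻ u in A n, ENNReal.ofReal (g (Metric.infDist u (cube d L)) ^ α))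
      ≤ ENNReal.ofReal (g n ^ α) * volume (A n) := by
    intro n
    have hpt : ∀ u ∈ A n, ENNReal.ofReal (g (Metric.infDist u (cube d L)) ^ α)
        ≤ ENNReal.ofReal (g n ^ α) := by
      intro u hu
      obtain ⟨i, hi⟩ : ∃ i, ¬ (u i ∈ Set.Icc (-(n:ℝ)) (L + n)) := by
        by_contra hcon
        push_neg at hcon
        exact hu.2 hcon
      rw [Set.mem_Icc, not_and_or, not_le, not_le] at hi
      obtain ⟨v₀, hv₀C, hv₀d⟩ :=
        (cube_isCompact hL0).exists_infDist_eq_dist (cube_nonempty hL0) u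
      have hC := hv₀C i
      have hn_le : (n:ℝ) ≤ Metric.infDist u (cube d L) := by
        rw [hv₀d]
        refine le_trans ?_ (coord_le_dist u v₀ i)
        rw [Real.dist_eq, le_abs]
        rcases hi with h | h
        · right
          have := hC.1
          linarith
        · left
          have := hC.2
          linarith
      apply ENNReal.ofReal_le_ofReal
      exact Real.rpow_le_rpow (hg0 _) (hgm hn_le) hα.le
    calc (∫⁻ u in A n, ENNReal.ofReal (g (Metric.infDist u (cube d L)) ^ α))
        ≤ ∫⁻ _u in A n, ENNReal.ofReal (g n ^ α) := setLIntegral_mono' (hAmeas n) hpt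
      _ = ENNReal.ofReal (g n ^ α) * volume (A n) := setLIntegral_const _ _
  have hvolA : ∀ n : ℕ,
      volume (A n) ≤ ENNReal.ofReal (d * (2 * (L + 2 * ((n:ℝ) + 1)) ^ (d - 1))) := by
    intro n
    have hcn : (0:ℝ) ≤ (n:ℝ) := n.cast_nonneg
    have h1 : volume (A n) = volume (B (n+1)) - volume (B n) := by
      rw [hA]
      exact measure_diff (hBmono n (n+1) (by omega)) (hBmeas n).nullMeasurableSet
        (by rw [hBvol n]; exact ENNReal.ofReal_ne_top)
    rw [h1, hBvol, hBvol, ← ENNReal.ofReal_sub _ (by positivity)]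
    apply ENNReal.ofReal_le_ofReal
    have h2 := pow_sub_pow_le d (a := L + 2*((n:ℝ)+1)) (b := L + 2*(n:ℝ))
      (by linarith) (by linarith)
    have h3 : L + 2*((n:ℝ)+1) - (L + 2*(n:ℝ)) = 2 := by ring
    rw [h3] at h2
    push_cast
    linarith
  calc (∫⁻ u in (cube d L)ᶜ, ENNReal.ofReal (g (Metric.infDist u (cube d L)) ^ α))
      = ∑' n, ∫⁻ u in A n, ENNReal.ofReal (g (Metric.infDist u (cube d L)) ^ α) := by
        rw [← hAu, lintegral_iUnion hAmeas hApd]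
    _ ≤ ∑' n : ℕ, ENNReal.ofReal
          (2 * d * (L + 2) ^ (d - 1) * (g n ^ α * ((n : ℝ) + 1) ^ (d - 1))) := by
        apply ENNReal.tsum_le_tsum
        intro n
        have hcn : (0:ℝ) ≤ (n:ℝ) := n.cast_nonneg
        calc (∫⁻ u in A n, ENNReal.ofReal (g (Metric.infDist u (cube d L)) ^ α))
            ≤ ENNReal.ofReal (g n ^ α) * volume (A n) := hshell n
          _ ≤ ENNReal.ofReal (g n ^ α)
              * ENNReal.ofReal (d * (2 * (L + 2 * ((n:ℝ) + 1)) ^ (d - 1))) :=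
              mul_le_mul_right (hvolA n) _
          _ = ENNReal.ofReal (g n ^ α * (d * (2 * (L + 2 * ((n:ℝ) + 1)) ^ (d - 1)))) :=
              (ENNReal.ofReal_mul (Real.rpow_nonneg (hg0 _) _)).symm
          _ ≤ _ := by
              apply ENNReal.ofReal_le_ofReal
              have hA1 : (L + 2*((n:ℝ)+1)) ^ (d-1) ≤ (L+2)^(d-1) * ((n:ℝ)+1)^(d-1) := by
                rw [← mul_pow]
                apply pow_le_pow_left₀ (by linarith) ?_ _
                nlinarith
              calc g n ^ α * (d * (2 * (L + 2*((n:ℝ)+1)) ^ (d-1)))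
                  = (2*d) * (g n ^ α * (L + 2*((n:ℝ)+1)) ^ (d-1)) := by ring
                _ ≤ (2*d) * (g n ^ α * ((L+2)^(d-1) * ((n:ℝ)+1)^(d-1))) := by
                    apply mul_le_mul_of_nonneg_left _ (by positivity)
                    exact mul_le_mul_of_nonneg_left hA1 (Real.rpow_nonneg (hg0 _) _)
                _ = 2 * d * (L+2)^(d-1) * (g n ^ α * ((n:ℝ)+1)^(d-1)) := by ring
    _ = ENNReal.ofReal (2 * d * (L + 2) ^ (d - 1))
        * ∑' n : ℕ, ENNReal.ofReal (g n ^ α * ((n : ℝ) + 1) ^ (d - 1)) := by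
        rw [← ENNReal.tsum_mul_left]
        apply tsum_congr
        intro n
        rw [← ENNReal.ofReal_mul (by positivity)]

lemma sum_bound {α : ℝ} (hα : 0 < α) {g : ℝ → ℝ} (hg0 : ∀ x, 0 ≤ g x) (hgm : Antitone g) :
    ∑' n : ℕ, ENNReal.ofReal (g n ^ α * ((n:ℝ)+1)^(d-1))
      ≤ ENNReal.ofReal (g 0 ^ α)
        + (ENNReal.ofReal (4^(d-1)) * (∫⁻ x in Set.Ioi (0:ℝ), ENNReal.ofReal (g x ^ α))
          + ENNReal.ofReal (2^(d-1))
            * ∫⁻ x in Set.Ioi (0:ℝ), ENNReal.ofReal (g x ^ α * x^(d-1))) := by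
  rw [tsum_eq_zero_add' ENNReal.summable]
  apply add_le_add
  · apply ENNReal.ofReal_le_ofReal
    simp
  · calc ∑' n:ℕ, ENNReal.ofReal (g (↑(n+1)) ^ α * ((↑(n+1):ℝ)+1)^(d-1))
        ≤ ∑' n:ℕ, ∫⁻ x in Set.Ico ((0:ℝ) + n*1) (0 + (n+1)*1),
            ENNReal.ofReal (g x ^ α * (x+2)^(d-1)) := by
          apply ENNReal.tsum_le_tsum
          intro n
          have hvol : volume (Set.Ico ((0:ℝ) + n*1) (0 + (n+1)*1)) = 1 := by
            rw [Real.volume_Ico]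
            norm_num
          calc ENNReal.ofReal (g (↑(n+1)) ^ α * ((↑(n+1):ℝ)+1)^(d-1))
              = ENNReal.ofReal (g (↑(n+1)) ^ α * ((↑(n+1):ℝ)+1)^(d-1))
                * volume (Set.Ico ((0:ℝ) + n*1) (0 + (n+1)*1)) := by rw [hvol, mul_one]
            _ = ∫⁻ _x in Set.Ico ((0:ℝ) + n*1) (0 + (n+1)*1),
                ENNReal.ofReal (g (↑(n+1)) ^ α * ((↑(n+1):ℝ)+1)^(d-1)) :=
                (setLIntegral_const _ _).symm
            _ ≤ ∫⁻ x in Set.Ico ((0:ℝ) + n*1) (0 + (n+1)*1),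
                ENNReal.ofReal (g x ^ α * (x+2)^(d-1)) := by
                apply setLIntegral_mono' measurableSet_Ico
                intro x hx
                obtain ⟨hx1, hx2⟩ := hx
                apply ENNReal.ofReal_le_ofReal
                have hxn : (n:ℝ) ≤ x := by linarith
                have hx3 : x ≤ (n:ℝ)+1 := by linarith
                apply mul_le_mul
                · apply Real.rpow_le_rpow (hg0 _) (hgm ?_) hα.le
                  push_cast
                  linarith
                · apply pow_le_pow_left₀ (by positivity) (by push_cast; linarith) _
                · positivity
                · exact Real.rpow_nonneg (hg0 _) _
      _ = ∫⁻ x in ⋃ n:ℕ, Set.Ico ((0:ℝ) + n*1) (0 + (n+1)*1),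
            ENNReal.ofReal (g x ^ α * (x+2)^(d-1)) :=
          (lintegral_iUnion (fun _ => measurableSet_Ico)
            (pairwise_disjoint_Ico_steps 0 one_pos.le) _).symm
      _ = ∫⁻ x in Set.Ici (0:ℝ), ENNReal.ofReal (g x ^ α * (x+2)^(d-1)) := by
          rw [iUnion_Ico_steps 0 one_pos]
      _ = ∫⁻ x in Set.Ioi (0:ℝ), ENNReal.ofReal (g x ^ α * (x+2)^(d-1)) :=
          setLIntegral_congr (Ioi_ae_eq_Ici (a := (0:ℝ))).symm
      _ ≤ ∫⁻ x in Set.Ioi (0:ℝ), (ENNReal.ofReal (4^(d-1)) * ENNReal.ofReal (g x^α)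
              + ENNReal.ofReal (2^(d-1)) * ENNReal.ofReal (g x^α * x^(d-1))) := by
          apply setLIntegral_mono' measurableSet_Ioi
          intro x hx
          have hx0 : (0:ℝ) < x := hx
          have h2 : (x+2)^(d-1) ≤ 2^(d-1) * (x^(d-1) + 2^(d-1)) := by
            rcases le_total x 2 with h | h
            · calc (x+2)^(d-1) ≤ 4^(d-1) := pow_le_pow_left₀ (by linarith) (by linarith) _
                _ = 2^(d-1) * 2^(d-1) := by rw [← mul_pow]; norm_num
                _ ≤ 2^(d-1) * (x^(d-1) + 2^(d-1)) := by
                    apply mul_le_mul_of_nonneg_left _ (by positivity)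
                    have h6 : (0:ℝ) ≤ x^(d-1) := by positivity
                    linarith
            · calc (x+2)^(d-1) ≤ (2*x)^(d-1) := pow_le_pow_left₀ (by linarith) (by linarith) _
                _ = 2^(d-1) * x^(d-1) := mul_pow 2 x (d-1)
                _ ≤ 2^(d-1) * (x^(d-1) + 2^(d-1)) := by
                    apply mul_le_mul_of_nonneg_left _ (by positivity)
                    have h6 : (0:ℝ) ≤ 2^(d-1) := by positivity
                    linarith
          have h3 : g x^α * (x+2)^(d-1)
              ≤ 4^(d-1) * g x^α + 2^(d-1) * (g x^α * x^(d-1)) := by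
            have h4 := mul_le_mul_of_nonneg_left h2 (Real.rpow_nonneg (hg0 x) α)
            have h5 : (4:ℝ)^(d-1) = 2^(d-1) * 2^(d-1) := by rw [← mul_pow]; norm_num
            calc g x^α * (x+2)^(d-1) ≤ g x^α * (2^(d-1)*(x^(d-1)+2^(d-1))) := h4
              _ = 4^(d-1) * g x^α + 2^(d-1) * (g x^α * x^(d-1)) := by rw [h5]; ring
          calc ENNReal.ofReal (g x^α * (x+2)^(d-1))
              ≤ ENNReal.ofReal (4^(d-1) * g x^α + 2^(d-1) * (g x^α * x^(d-1))) :=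
                ENNReal.ofReal_le_ofReal h3
            _ ≤ ENNReal.ofReal (4^(d-1) * g x^α)
                + ENNReal.ofReal (2^(d-1) * (g x^α * x^(d-1))) := ENNReal.ofReal_add_le
            _ = _ := by
                rw [ENNReal.ofReal_mul (by positivity), ENNReal.ofReal_mul (by positivity)]
      _ = ENNReal.ofReal (4^(d-1)) * (∫⁻ x in Set.Ioi (0:ℝ), ENNReal.ofReal (g x^α))
            + ENNReal.ofReal (2^(d-1))
              * ∫⁻ x in Set.Ioi (0:ℝ), ENNReal.ofReal (g x^α * x^(d-1)) := by
          rw [lintegral_add_left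
            (((hgm.measurable.pow measurable_const).ennreal_ofReal).const_mul _)]
          rw [lintegral_const_mul' _ _ ENNReal.ofReal_ne_top,
            lintegral_const_mul' _ _ ENNReal.ofReal_ne_top]

lemma caseB (hd : 0 < d) {α : ℝ} (hα : 0 < α) {g : ℝ → ℝ} (hg0 : ∀ x, 0 ≤ g x)
    (hgm : Antitone g)
    (hK : (∫⁻ x in Set.Ioi (0:ℝ), ENNReal.ofReal (g x ^ α)) = ⊤)
    {L : ℝ} (hL : 1 ≤ L) :
    (∫⁻ u in (cube d L)ᶜ, ENNReal.ofReal (g (Metric.infDist u (cube d L)) ^ α)) = ⊤ := by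
  have hL0 : (0:ℝ) ≤ L := by linarith
  set i₀ : Fin d := ⟨0, hd⟩ with hi₀
  have hlow : ∀ k : ℕ,
      (∫⁻ x in Set.Ici (1/((k:ℝ)+1)), ENNReal.ofReal (g x ^ α)) * (ENNReal.ofReal L)^(d-1)
      ≤ ∫⁻ u in (cube d L)ᶜ, ENNReal.ofReal (g (Metric.infDist u (cube d L)) ^ α) := by
    intro k
    set δ : ℝ := 1/((k:ℝ)+1) with hδdef
    have hδ : 0 < δ := by positivity
    set Sl : ℕ → Set (EuclideanSpace ℝ (Fin d)) := fun n =>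
      {u | ∀ i, u i ∈ (if i = i₀ then Set.Ico (-(δ*((n:ℝ)+1))) (-(δ*(n:ℝ)))
        else Set.Icc 0 L)} with hSl
    have hSmeas : ∀ n, MeasurableSet (Sl n) := by
      intro n
      apply measurableSet_coordSet
      intro i
      by_cases h : i = i₀
      · rw [if_pos h]; exact measurableSet_Ico
      · rw [if_neg h]; exact measurableSet_Icc
    have hSvol : ∀ n, volume (Sl n) = ENNReal.ofReal δ * (ENNReal.ofReal L)^(d-1) := by
      intro n
      rw [hSl]
      rw [vol_coordSet _ (by
        intro i
        by_cases h : i = i₀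
        · rw [if_pos h]; exact measurableSet_Ico
        · rw [if_neg h]; exact measurableSet_Icc)]
      rw [← Finset.mul_prod_erase Finset.univ _ (Finset.mem_univ i₀)]
      rw [if_pos rfl, Real.volume_Ico,
        show -(δ*(n:ℝ)) - -(δ*((n:ℝ)+1)) = δ from by ring]
      congr 1
      have hprod : ∀ i ∈ Finset.univ.erase i₀,
          volume (if i = i₀ then Set.Ico (-(δ*((n:ℝ)+1))) (-(δ*(n:ℝ))) else Set.Icc 0 L)
            = ENNReal.ofReal L := by
        intro i hi
        rw [if_neg (Finset.ne_of_mem_erase hi), Real.volume_Icc, sub_zero]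
      rw [Finset.prod_congr rfl hprod, Finset.prod_const,
        Finset.card_erase_of_mem (Finset.mem_univ i₀), Finset.card_univ, Fintype.card_fin]
    have hSsub : ∀ n, Sl n ⊆ (cube d L)ᶜ := by
      intro n u hu hC
      have h1 := hu i₀
      rw [if_pos rfl] at h1
      have h2 := (hC i₀).1
      have hn0 : (0:ℝ) ≤ δ * n := by positivity
      have h3 := h1.2
      linarith
    have hSpd : Pairwise (Function.onFun Disjoint Sl) := by
      intro m n hmn
      wlog h : m < n generalizing m n
      · exact (this hmn.symm (hmn.lt_or_gt.resolve_left h)).symm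
      apply Set.disjoint_left.mpr
      intro x hx1 hx2
      have h1 := hx1 i₀
      rw [if_pos rfl] at h1
      have h2 := hx2 i₀
      rw [if_pos rfl] at h2
      have hc : (m:ℝ) + 1 ≤ n := by exact_mod_cast h
      nlinarith [h1.1, h2.2, hδ.le]
    have hSpt : ∀ n : ℕ, ∀ u ∈ Sl n,
        ENNReal.ofReal (g (δ*((n:ℝ)+1)) ^ α)
          ≤ ENNReal.ofReal (g (Metric.infDist u (cube d L)) ^ α) := by
      intro n u hu
      set v : EuclideanSpace ℝ (Fin d) := WithLp.toLp 2 (fun i => if i = i₀ then 0 else u i) with hv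
      have hvC : v ∈ cube d L := by
        intro i
        by_cases h : i = i₀
        · show (if i = i₀ then (0:ℝ) else u i) ∈ Set.Icc 0 L
          rw [if_pos h]
          exact ⟨le_refl 0, hL0⟩
        · show (if i = i₀ then (0:ℝ) else u i) ∈ Set.Icc 0 L
          rw [if_neg h]
          have h5 := hu i
          rwa [if_neg h] at h5
      have hu0 := hu i₀
      rw [if_pos rfl] at hu0
      have hneg : u i₀ < 0 := by
        have h3 := hu0.2
        have hn0 : (0:ℝ) ≤ δ * n := by positivity
        linarith
      have hdistuv : dist u v = -(u i₀) := by
        rw [EuclideanSpace.dist_eq]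
        have hsum : (∑ j, dist (u j) (v j)^2) = dist (u i₀) (v i₀)^2 := by
          apply Finset.sum_eq_single_of_mem i₀ (Finset.mem_univ _)
          intro j _ hj
          have h4 : v j = u j := by
            show (if j = i₀ then (0:ℝ) else u j) = u j
            rw [if_neg hj]
          rw [h4, dist_self]
          norm_num
        have hvi : v i₀ = 0 := by
          show (if i₀ = i₀ then (0:ℝ) else u i₀) = 0
          rw [if_pos rfl]
        rw [hsum, hvi, Real.dist_eq, sub_zero, sq_abs, Real.sqrt_sq_eq_abs, abs_of_neg hneg]
      have hinf : Metric.infDist u (cube d L) ≤ δ*((n:ℝ)+1) := by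
        have h6 := Metric.infDist_le_dist_of_mem (x := u) hvC
        rw [hdistuv] at h6
        have h7 := hu0.1
        linarith
      exact ENNReal.ofReal_le_ofReal (Real.rpow_le_rpow (hg0 _) (hgm hinf) hα.le)
    calc (∫⁻ x in Set.Ici δ, ENNReal.ofReal (g x ^ α)) * (ENNReal.ofReal L)^(d-1)
        = (∫⁻ x in ⋃ n:ℕ, Set.Ico (δ + n*δ) (δ + (n+1)*δ), ENNReal.ofReal (g x^α))
            * (ENNReal.ofReal L)^(d-1) := by
          rw [iUnion_Ico_steps δ hδ]
      _ = (∑' n:ℕ, ∫⁻ x in Set.Ico (δ + n*δ) (δ + (n+1)*δ), ENNReal.ofReal (g x^α))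
            * (ENNReal.ofReal L)^(d-1) := by
          rw [lintegral_iUnion (fun _ => measurableSet_Ico)
            (pairwise_disjoint_Ico_steps δ hδ.le)]
      _ ≤ (∑' n:ℕ, ENNReal.ofReal (g (δ*((n:ℝ)+1)) ^ α) * ENNReal.ofReal δ)
            * (ENNReal.ofReal L)^(d-1) := by
          apply mul_le_mul_left
          apply ENNReal.tsum_le_tsum
          intro n
          have hvol : volume (Set.Ico (δ + n*δ) (δ + (n+1)*δ)) = ENNReal.ofReal δ := by
            rw [Real.volume_Ico]
            congr 1
            ring
          calc ∫⁻ x in Set.Ico (δ + n*δ) (δ + (n+1)*δ), ENNReal.ofReal (g x^α)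
              ≤ ∫⁻ _x in Set.Ico (δ + n*δ) (δ + (n+1)*δ),
                  ENNReal.ofReal (g (δ*((n:ℝ)+1))^α) := by
                apply setLIntegral_mono' measurableSet_Ico
                intro x hx
                apply ENNReal.ofReal_le_ofReal
                apply Real.rpow_le_rpow (hg0 _) (hgm ?_) hα.le
                have h7 : δ*((n:ℝ)+1) = δ + n*δ := by ring
                rw [h7]
                exact hx.1
            _ = ENNReal.ofReal (g (δ*((n:ℝ)+1))^α) * ENNReal.ofReal δ := by
                rw [setLIntegral_const, hvol]
      _ = ∑' n:ℕ, ENNReal.ofReal (g (δ*((n:ℝ)+1)) ^ α)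
            * (ENNReal.ofReal δ * (ENNReal.ofReal L)^(d-1)) := by
          rw [← ENNReal.tsum_mul_right]
          exact tsum_congr fun n => mul_assoc _ _ _
      _ = ∑' n:ℕ, ENNReal.ofReal (g (δ*((n:ℝ)+1)) ^ α) * volume (Sl n) :=
          tsum_congr fun n => by rw [hSvol n]
      _ = ∑' n:ℕ, ∫⁻ _u in Sl n, ENNReal.ofReal (g (δ*((n:ℝ)+1)) ^ α) :=
          tsum_congr fun n => (setLIntegral_const _ _).symm
      _ ≤ ∑' n:ℕ, ∫⁻ u in Sl n, ENNReal.ofReal (g (Metric.infDist u (cube d L)) ^ α) :=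
          ENNReal.tsum_le_tsum fun n => setLIntegral_mono' (hSmeas n) (hSpt n)
      _ = ∫⁻ u in ⋃ n, Sl n, ENNReal.ofReal (g (Metric.infDist u (cube d L)) ^ α) :=
          (lintegral_iUnion hSmeas hSpd _).symm
      _ ≤ ∫⁻ u in (cube d L)ᶜ, ENNReal.ofReal (g (Metric.infDist u (cube d L)) ^ α) :=
          lintegral_mono' (Measure.restrict_mono (Set.iUnion_subset hSsub) le_rfl) le_rfl
  have hsup : (⨆ k:ℕ, ∫⁻ x in Set.Ici (1/((k:ℝ)+1)), ENNReal.ofReal (g x^α)) = ⊤ := by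
    set ν := volume.withDensity (fun x => ENNReal.ofReal (g x^α)) with hν
    have happ : ∀ s : Set ℝ, MeasurableSet s → ν s = ∫⁻ x in s, ENNReal.ofReal (g x^α) :=
      fun s hs => withDensity_apply _ hs
    have hdir : Directed (· ⊆ ·) (fun k:ℕ => Set.Ici (1/((k:ℝ)+1))) := by
      apply Monotone.directed_le
      intro k l hkl
      have hcast : ((k:ℝ)+1) ≤ ((l:ℝ)+1) := by
        have := (Nat.cast_le (α := ℝ)).mpr hkl
        linarith
      exact Set.Ici_subset_Ici.mpr (one_div_le_one_div_of_le (by positivity) hcast)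
    have hU : (⋃ k:ℕ, Set.Ici (1/((k:ℝ)+1))) = Set.Ioi 0 := by
      ext x
      simp only [Set.mem_iUnion, Set.mem_Ici, Set.mem_Ioi]
      constructor
      · rintro ⟨m, hm⟩
        have : (0:ℝ) < 1/((m:ℝ)+1) := by positivity
        linarith
      · intro hx
        obtain ⟨n, hn⟩ := exists_nat_one_div_lt hx
        exact ⟨n, hn.le⟩
    calc (⨆ k:ℕ, ∫⁻ x in Set.Ici (1/((k:ℝ)+1)), ENNReal.ofReal (g x^α))
        = ⨆ k:ℕ, ν (Set.Ici (1/((k:ℝ)+1))) :=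
          iSup_congr fun k => (happ _ measurableSet_Ici).symm
      _ = ν (⋃ k : ℕ, Set.Ici (1/((k:ℝ)+1))) := (Directed.measure_iUnion hdir).symm
      _ = ν (Set.Ioi 0) := by rw [hU]
      _ = ⊤ := by rw [happ _ measurableSet_Ioi]; exact hK
  apply top_unique
  have h9 : (⊤:ENNReal) = (⨆ k:ℕ, ∫⁻ x in Set.Ici (1/((k:ℝ)+1)), ENNReal.ofReal (g x^α))
      * (ENNReal.ofReal L)^(d-1) := by
    rw [hsup, ENNReal.top_mul (pow_ne_zero _ (ENNReal.ofReal_pos.mpr (by linarith)).ne')]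
  rw [h9, ENNReal.iSup_mul]
  exact iSup_le fun k => hlow k

theorem main (d : ℕ) (hd : 0 < d) (α : ℝ) (hα : 0 < α)
    (g : ℝ → ℝ) (hg0 : ∀ x, 0 ≤ g x) (hgm : Antitone g)
    (hint : IntegrableOn (fun x => g x ^ α * x ^ (d - 1)) (Set.Ioi (0 : ℝ))) :
    Tendsto (fun L : ℝ =>
      (∫ u in (cube d L)ᶜ, ⨆ v ∈ cube d L, g (dist v u) ^ α) / L ^ d) atTop (nhds 0) := by
  have hI : (∫⁻ x in Set.Ioi (0:ℝ), ENNReal.ofReal (g x ^ α * x^(d-1))) < ⊤ :=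
    hint.lintegral_lt_top
  by_cases hK : IntegrableOn (fun x => g x ^ α) (Set.Ioi (0:ℝ))
  · -- Case A : g ^ α is integrable near 0
    have hKlt := hK.lintegral_lt_top
    set M : ENNReal := ENNReal.ofReal (g 0 ^ α)
        + (ENNReal.ofReal (4^(d-1)) * (∫⁻ x in Set.Ioi (0:ℝ), ENNReal.ofReal (g x ^ α))
          + ENNReal.ofReal (2^(d-1))
            * ∫⁻ x in Set.Ioi (0:ℝ), ENNReal.ofReal (g x ^ α * x^(d-1))) with hM
    have hMne : M ≠ ⊤ := by
      rw [hM]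
      apply ENNReal.add_ne_top.mpr
      refine ⟨ENNReal.ofReal_ne_top, ?_⟩
      apply ENNReal.add_ne_top.mpr
      exact ⟨ENNReal.mul_ne_top ENNReal.ofReal_ne_top hKlt.ne,
        ENNReal.mul_ne_top ENNReal.ofReal_ne_top hI.ne⟩
    have hbound : ∀ L : ℝ, 1 ≤ L →
        (∫ u in (cube d L)ᶜ, ⨆ v ∈ cube d L, g (dist v u) ^ α)
          ≤ 2 * d * (L+2)^(d-1) * M.toReal := by
      intro L hL
      have hL0 : (0:ℝ) ≤ L := by linarith
      rw [integral_eq hα hg0 hgm hL0]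
      have h2 := sum_bound (d := d) hα hg0 hgm
      rw [← hM] at h2
      have h1 : (∫⁻ u in (cube d L)ᶜ, ENNReal.ofReal (g (Metric.infDist u (cube d L)) ^ α))
          ≤ ENNReal.ofReal (2*d*(L+2)^(d-1)) * M :=
        le_trans (caseA hα hg0 hgm hL) (mul_le_mul_right h2 _)
      calc (∫⁻ u in (cube d L)ᶜ,
              ENNReal.ofReal (g (Metric.infDist u (cube d L)) ^ α)).toReal
          ≤ (ENNReal.ofReal (2*d*(L+2)^(d-1)) * M).toReal :=
            ENNReal.toReal_mono (ENNReal.mul_ne_top ENNReal.ofReal_ne_top hMne) h1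
        _ = 2*d*(L+2)^(d-1) * M.toReal := by
            rw [ENNReal.toReal_mul, ENNReal.toReal_ofReal (by positivity)]
    apply tendsto_of_tendsto_of_tendsto_of_le_of_le' (g := fun _ : ℝ => (0:ℝ))
      (h := fun L : ℝ => (2*d*3^(d-1)*M.toReal) / L)
      tendsto_const_nhds (tendsto_const_nhds.div_atTop tendsto_id)
    · filter_upwards [eventually_ge_atTop (1:ℝ)] with L hL
      have hnn : 0 ≤ ∫ u in (cube d L)ᶜ, ⨆ v ∈ cube d L, g (dist v u) ^ α :=
        integral_nonneg fun u => Real.iSup_nonneg fun v =>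
          Real.iSup_nonneg fun _ => Real.rpow_nonneg (hg0 _) _
      exact div_nonneg hnn (pow_nonneg (by linarith) d)
    · filter_upwards [eventually_ge_atTop (1:ℝ)] with L hL
      have hL0 : (0:ℝ) < L := by linarith
      have h3 := hbound L hL
      have hMt : (0:ℝ) ≤ M.toReal := ENNReal.toReal_nonneg
      calc (∫ u in (cube d L)ᶜ, ⨆ v ∈ cube d L, g (dist v u) ^ α) / L ^ d
          ≤ (2*d*(L+2)^(d-1) * M.toReal) / L^d := by gcongr
        _ ≤ (2*d*(3*L)^(d-1) * M.toReal) / L^d := by gcongr <;> linarith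
        _ = (2*d*3^(d-1)*M.toReal) / L := by
            rw [mul_pow]
            have h5 : L ^ d = L^(d-1) * L := by
              conv_lhs => rw [show d = (d-1)+1 from (Nat.succ_pred_eq_of_pos hd).symm]
              rw [pow_succ]
            rw [h5]
            have h6 : L^(d-1) ≠ 0 := pow_ne_zero _ hL0.ne'
            field_simp
  · -- Case B : not integrable, the lintegral is infinite and the integral vanishes
    have hKtop : (∫⁻ x in Set.Ioi (0:ℝ), ENNReal.ofReal (g x ^ α)) = ⊤ := by
      by_contra h
      apply hK
      refine ⟨((hgm.measurable.pow measurable_const)).aestronglyMeasurable, ?_⟩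
      rw [hasFiniteIntegral_iff_ofReal
        (Filter.Eventually.of_forall fun x => Real.rpow_nonneg (hg0 _) _)]
      exact lt_top_iff_ne_top.mpr h
    apply Tendsto.congr' ?_ tendsto_const_nhds
    filter_upwards [eventually_ge_atTop (1:ℝ)] with L hL
    have hL0 : (0:ℝ) ≤ L := by linarith
    rw [integral_eq hα hg0 hgm hL0, caseB hd hα hg0 hgm hKtop hL]
    simp

end

end CubeLittleO

open CubeLittleO in
theorem cube_complement_integral_little_o
    (d : ℕ) (hd : 0 < d) (α : ℝ) (hα : 0 < α)
    (g : ℝ → ℝ) (hg0 : ∀ x, 0 ≤ g x) (hgmono : AntitoneOn g (Set.Ici 0))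
    (hint : IntegrableOn (fun x => g x ^ α * x ^ (d - 1)) (Set.Ioi (0 : ℝ))) :
    Tendsto (fun L : ℝ =>
      (∫ u in {u : EuclideanSpace ℝ (Fin d) | ∀ i, u i ∈ Set.Icc 0 L}ᶜ,
        ⨆ v ∈ {v : EuclideanSpace ℝ (Fin d) | ∀ i, v i ∈ Set.Icc 0 L},
          g (dist v u) ^ α) / L ^ d) atTop (nhds 0) := by
  set G : ℝ → ℝ := fun x => g (max x 0) with hG
  have hG0 : ∀ x, 0 ≤ G x := fun x => hg0 _
  have hGanti : Antitone G := fun x y hxy =>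
    hgmono (Set.mem_Ici.mpr (le_max_right x 0)) (Set.mem_Ici.mpr (le_max_right y 0))
      (max_le_max hxy le_rfl)
  have hGint : IntegrableOn (fun x => G x ^ α * x ^ (d - 1)) (Set.Ioi (0 : ℝ)) := by
    apply hint.congr_fun ?_ measurableSet_Ioi
    intro x hx
    have hx0 : (0:ℝ) < x := hx
    rw [hG]
    simp only
    rw [max_eq_left hx0.le]
  have hmax : ∀ (v u : EuclideanSpace ℝ (Fin d)), max (dist v u) 0 = dist v u :=
    fun v u => max_eq_left dist_nonneg
  have hmain := main d hd α hα G hG0 hGanti hGint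
  have heq : (fun L : ℝ =>
      (∫ u in (cube d L)ᶜ, ⨆ v ∈ cube d L, G (dist v u) ^ α) / L ^ d)
      = fun L : ℝ =>
      (∫ u in {u : EuclideanSpace ℝ (Fin d) | ∀ i, u i ∈ Set.Icc 0 L}ᶜ,
        ⨆ v ∈ {v : EuclideanSpace ℝ (Fin d) | ∀ i, v i ∈ Set.Icc 0 L},
          g (dist v u) ^ α) / L ^ d := by
    funext L
    simp only [cube, hG, hmax]
  rw [← heq]
  exact hmain
end

section
/- Let F be a distribution function on ℝ whose tail F̄ = 1 - F is regularly varying of index -α (α > 0), so that in particular F is subexponential, i.e. F̄(x - y)/F̄(x) → 1 for every fixed y ∈ ℝ as x → ∞. Let X have distribution F and let Y be an independent real random variable with E[(max(Y,0))^β] < ∞ for some β > α. Then P(X + Y > x) ∼ F̄(x) as x → ∞. -/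
open Filter MeasureTheory ProbabilityTheory Set

lemma aux_pow_lower (Fbar : ℝ → ℝ) (hanti : Antitone Fbar) (hpos : ∀ x, 0 < Fbar x)
    (γ : ℝ) (hγ : 0 < γ) (t : ℝ) (ht : 1 < t) (x₀ : ℝ) (hx₀ : 1 ≤ x₀)
    (hstep : ∀ x ≥ x₀, t ^ (-γ) * Fbar x ≤ Fbar (t * x)) :
    ∃ c > 0, ∀ x ≥ x₀, c * x ^ (-γ) ≤ Fbar x := by
  have ht0 : (0:ℝ) < t := lt_trans one_pos ht
  have htγ : (0:ℝ) < t ^ (-γ) := Real.rpow_pos_of_pos ht0 _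
  have key : ∀ n : ℕ, (t ^ (-γ)) ^ n * Fbar x₀ ≤ Fbar (t ^ n * x₀) := by
    intro n
    induction n with
    | zero => simp
    | succ n ih =>
      have h1 : x₀ ≤ t ^ n * x₀ := by
        nlinarith [one_le_pow₀ ht.le (n:=n), hx₀]
      calc (t ^ (-γ)) ^ (n+1) * Fbar x₀ = t ^ (-γ) * ((t ^ (-γ)) ^ n * Fbar x₀) := by ring
        _ ≤ t ^ (-γ) * Fbar (t ^ n * x₀) := by
            exact mul_le_mul_of_nonneg_left ih htγ.le
        _ ≤ Fbar (t * (t ^ n * x₀)) := hstep _ h1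
        _ = Fbar (t ^ (n+1) * x₀) := by ring_nf
  have hx0 : (0:ℝ) < x₀ := lt_of_lt_of_le one_pos hx₀
  refine ⟨(t / x₀) ^ (-γ) * Fbar x₀, mul_pos (Real.rpow_pos_of_pos (by positivity) _) (hpos x₀), fun x hx => ?_⟩
  have hxpos : (0:ℝ) < x := lt_of_lt_of_le hx0 hx
  have hratio : 1 ≤ x / x₀ := (one_le_div hx0).2 hx
  obtain ⟨n, hn1, hn2⟩ := exists_nat_pow_near hratio ht
  have h1 : x ≤ t ^ (n+1) * x₀ := by
    rw [div_lt_iff₀ hx0] at hn2; linarith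
  have h2 : Fbar (t ^ (n+1) * x₀) ≤ Fbar x := hanti h1
  have h3 := key (n+1)
  -- (t ^ (-γ)) ^ (n+1) = (t ^ (n+1)) ^ (-γ)
  have h4 : (t ^ (-γ)) ^ (n+1) = ((t:ℝ) ^ (n+1) : ℝ) ^ (-γ) := by
    rw [← Real.rpow_natCast (t ^ (-γ)) (n+1), ← Real.rpow_natCast t (n+1),
      ← Real.rpow_mul ht0.le, ← Real.rpow_mul ht0.le, mul_comm]
  have h5 : (t:ℝ) ^ (n+1) ≤ t * x / x₀ := by
    have : (t:ℝ) ^ (n+1) = t * t ^ n := by ring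
    rw [this]
    rw [mul_div_assoc]
    exact mul_le_mul_of_nonneg_left hn1 ht0.le
  have h6 : (t * x / x₀) ^ (-γ) ≤ ((t:ℝ) ^ (n+1)) ^ (-γ) := by
    have hp : (0:ℝ) < t * x / x₀ := by positivity
    have hq : (0:ℝ) < (t:ℝ) ^ (n+1) := by positivity
    rw [Real.rpow_neg hp.le, Real.rpow_neg hq.le]
    exact inv_anti₀ (Real.rpow_pos_of_pos hq γ)
      (Real.rpow_le_rpow hq.le h5 hγ.le)
  have h7 : (t / x₀) ^ (-γ) * x ^ (-γ) = (t * x / x₀) ^ (-γ) := by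
    rw [← Real.mul_rpow (by positivity) (by positivity)]
    ring_nf
  calc (t / x₀) ^ (-γ) * Fbar x₀ * x ^ (-γ)
      = (t * x / x₀) ^ (-γ) * Fbar x₀ := by rw [← h7]; ring
    _ ≤ (t ^ (n+1)) ^ (-γ) * Fbar x₀ := mul_le_mul_of_nonneg_right h6 (hpos x₀).le
    _ = (t ^ (-γ)) ^ (n+1) * Fbar x₀ := by rw [h4]
    _ ≤ Fbar (t ^ (n+1) * x₀) := h3
    _ ≤ Fbar x := h2


private lemma div_le_div_of_le_left' {a b c : ℝ} (h : a ≤ b) (hc : 0 < c) :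
    a / c ≤ b / c := by
  apply div_le_div_of_nonneg_right h hc.le

theorem sum_with_lighter_tail_equivalence
    {Ω : Type*} [MeasureSpace Ω] [IsProbabilityMeasure (ℙ : Measure Ω)]
    (X Y : Ω → ℝ) (hXm : Measurable X) (hYm : Measurable Y)
    (hindep : IndepFun X Y ℙ)
    (α β : ℝ) (hα : 0 < α) (hβ : α < β)
    (Fbar : ℝ → ℝ) (hF : ∀ x, Fbar x = (ℙ {ω | x < X ω}).toReal)
    (hRV : ∀ t > 0, Tendsto (fun x => Fbar (t * x) / Fbar x) atTop (nhds (t ^ (-α))))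
    (hlongtail : ∀ y : ℝ, Tendsto (fun x => Fbar (x - y) / Fbar x) atTop (nhds 1))
    (hmom : Integrable (fun ω => max (Y ω) 0 ^ β) ℙ) :
    Tendsto (fun x => (ℙ {ω | x < X ω + Y ω}).toReal / Fbar x) atTop (nhds 1) := by
  set μ : Measure ℝ := Measure.map X ℙ with hμdef
  set ν : Measure ℝ := Measure.map Y ℙ with hνdef
  haveI : IsProbabilityMeasure μ := Measure.isProbabilityMeasure_map hXm.aemeasurable
  haveI : IsProbabilityMeasure ν := Measure.isProbabilityMeasure_map hYm.aemeasurable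
  -- basic facts about Fbar
  have hμIoi : ∀ z : ℝ, ℙ {ω | z < X ω} = μ (Ioi z) := by
    intro z
    rw [hμdef, Measure.map_apply hXm measurableSet_Ioi]
    rfl
  have hFμ : ∀ z, Fbar z = (μ (Ioi z)).toReal := fun z => by rw [hF z, hμIoi z]
  have hFnn : ∀ z, 0 ≤ Fbar z := fun z => by rw [hF z]; exact ENNReal.toReal_nonneg
  have hFle1 : ∀ z, Fbar z ≤ 1 := by
    intro z
    rw [hFμ z]
    exact ENNReal.toReal_le_of_le_ofReal one_pos.le (by simpa using prob_le_one)
  have hFanti : Antitone Fbar := by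
    intro a b hab
    rw [hFμ a, hFμ b]
    exact ENNReal.toReal_mono (measure_ne_top _ _) (measure_mono (Ioi_subset_Ioi hab))
  have hFmeas : Measurable Fbar := hFanti.measurable
  have hFpos : ∀ z, 0 < Fbar z := by
    by_contra h
    push_neg at h
    obtain ⟨z₀, hz₀⟩ := h
    have hz0 : Fbar z₀ = 0 := le_antisymm hz₀ (hFnn z₀)
    have hev : ∀ᶠ x in atTop, Fbar (x - 0) / Fbar x = 0 := by
      filter_upwards [eventually_ge_atTop z₀] with x hx
      have : Fbar x = 0 := le_antisymm (hz0 ▸ hFanti hx) (hFnn x)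
      simp [this]
    have h0 : Tendsto (fun x => Fbar (x - 0) / Fbar x) atTop (nhds 0) :=
      Tendsto.congr' (by filter_upwards [hev] with x hx using hx.symm) tendsto_const_nhds
    exact one_ne_zero (tendsto_nhds_unique (hlongtail 0) h0)
  -- key identity: P(x < X + Y) = ∫ Fbar (x - y) dν
  have hkey : ∀ x : ℝ, (ℙ {ω | x < X ω + Y ω}).toReal = ∫ y, Fbar (x - y) ∂ν := by
    intro x
    have hsm : MeasurableSet {p : ℝ × ℝ | x < p.1 + p.2} :=
      measurableSet_lt measurable_const (measurable_fst.add measurable_snd)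
    have hmap : Measure.map (fun ω => (X ω, Y ω)) ℙ = μ.prod ν :=
      (indepFun_iff_map_prod_eq_prod_map_map hXm.aemeasurable hYm.aemeasurable).mp hindep
    have h1 : ℙ {ω | x < X ω + Y ω} = (μ.prod ν) {p : ℝ × ℝ | x < p.1 + p.2} := by
      rw [← hmap, Measure.map_apply (hXm.prodMk hYm) hsm]
      rfl
    have h2 : (μ.prod ν) {p : ℝ × ℝ | x < p.1 + p.2} = ∫⁻ y, μ (Ioi (x - y)) ∂ν := by
      rw [Measure.prod_apply_symm hsm]
      congr 1
      funext y
      congr 1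
      ext x'
      simp [sub_lt_iff_lt_add]
    have hmono : Monotone fun y => μ (Ioi (x - y)) := by
      intro a b hab
      exact measure_mono (Ioi_subset_Ioi (by linarith))
    rw [h1, h2, ← integral_toReal hmono.measurable.aemeasurable
      (ae_of_all _ fun y => measure_lt_top _ _)]
    exact integral_congr_ae (ae_of_all _ fun y => (hFμ (x - y)).symm)
  -- integrability
  have hintF : ∀ x : ℝ, Integrable (fun y => Fbar (x - y)) ν := by
    intro x
    refine (integrable_const (1:ℝ)).mono' ?_ ?_
    · exact (hFmeas.comp (measurable_const.sub measurable_id)).aestronglyMeasurable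
    · exact ae_of_all _ fun y => by
        rw [Real.norm_eq_abs, abs_of_nonneg (hFnn _)]; exact hFle1 _
  have hintD : ∀ x : ℝ, Integrable (fun y => Fbar (x - y) / Fbar x) ν :=
    fun x => (hintF x).div_const _
  -- part A : integral over Iic (x/2) tends to 1
  have hA : Tendsto (fun x => ∫ y in Iic (x/2), Fbar (x - y) / Fbar x ∂ν) atTop (nhds 1) := by
    have h1 : Tendsto (fun x => ∫ y, (Iic (x/2)).indicator
        (fun y => Fbar (x - y) / Fbar x) y ∂ν) atTop (nhds (∫ _, (1:ℝ) ∂ν)) := by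
      have hhalf : Tendsto (fun x => Fbar ((1/2) * x) / Fbar x) atTop
          (nhds ((1/2 : ℝ) ^ (-α))) := hRV (1/2) (by norm_num)
      have hCbd : ∀ᶠ x in atTop, Fbar (x/2) / Fbar x ≤ (1/2 : ℝ) ^ (-α) + 1 := by
        filter_upwards [hhalf.eventually (eventually_le_nhds
          (lt_add_of_pos_right _ one_pos))] with x hx
        simpa [mul_comm, div_eq_mul_inv, one_mul, mul_comm (2:ℝ)⁻¹ x] using hx
      refine tendsto_integral_filter_of_dominated_convergence
        (fun _ => (1/2 : ℝ) ^ (-α) + 1) ?_ ?_ (integrable_const _) ?_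
      · filter_upwards with x
        exact (((hFmeas.comp (measurable_const.sub measurable_id)).div_const
          _).indicator measurableSet_Iic).aestronglyMeasurable
      · filter_upwards [hCbd] with x hx
        refine ae_of_all _ fun y => ?_
        rw [Real.norm_eq_abs]
        by_cases hy : y ∈ Iic (x/2)
        · rw [indicator_of_mem hy, abs_of_nonneg (div_nonneg (hFnn _) (hFnn _))]
          have hle : Fbar (x - y) ≤ Fbar (x/2) := hFanti (by simp at hy; linarith)
          calc Fbar (x - y) / Fbar x ≤ Fbar (x/2) / Fbar x :=
                div_le_div_of_le_left' hle (hFpos x)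
            _ ≤ (1/2 : ℝ) ^ (-α) + 1 := hx
        · rw [indicator_of_notMem hy]
          simp
          positivity
      · refine ae_of_all _ fun y => ?_
        refine Tendsto.congr' ?_ (hlongtail y)
        filter_upwards [eventually_ge_atTop (2*y)] with x hx
        rw [indicator_of_mem (by simpa using by linarith : y ∈ Iic (x/2))]
    have : (∫ _, (1:ℝ) ∂ν) = 1 := by simp
    rw [this] at h1
    refine h1.congr fun x => ?_
    rw [integral_indicator measurableSet_Iic]
  -- part B : integral over Ioi (x/2) tends to 0
  have hB : Tendsto (fun x => ∫ y in Ioi (x/2), Fbar (x - y) / Fbar x ∂ν) atTop (nhds 0) := by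
    -- growth : x^β * Fbar x → ∞
    have hT : Tendsto (fun x => x ^ β * Fbar x) atTop atTop := by
      set γ : ℝ := (α + β) / 2 with hγdef
      have hγα : α < γ := by rw [hγdef]; linarith
      have hγβ : γ < β := by rw [hγdef]; linarith
      have hγ0 : 0 < γ := lt_trans hα hγα
      set t : ℝ := 2 ^ (1/(γ - α)) with htdef
      have ht1 : 1 < t := by
        rw [htdef]
        calc (1:ℝ) = 2 ^ (0:ℝ) := by simp
          _ < 2 ^ (1/(γ-α)) := Real.rpow_lt_rpow_of_exponent_lt one_lt_two
              (by have h : (0:ℝ) < γ - α := by linarith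
                  positivity)
      have ht0 : (0:ℝ) < t := lt_trans one_pos ht1
      have hlt : t ^ (-γ) < t ^ (-α) :=
        Real.rpow_lt_rpow_of_exponent_lt ht1 (by linarith)
      obtain ⟨x₁, hx₁⟩ := eventually_atTop.mp
        ((hRV t ht0).eventually (eventually_ge_nhds hlt))
      set x₀ : ℝ := max x₁ 1 with hx₀def
      obtain ⟨c, hc, hlow⟩ := aux_pow_lower Fbar hFanti hFpos γ hγ0 t ht1 x₀
        (le_max_right _ _) (fun x hx => by
          have := hx₁ x (le_trans (le_max_left _ _) hx)
          rw [le_div_iff₀ (hFpos x)] at this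
          linarith)
      have h2 : Tendsto (fun x => c * x ^ (β - γ)) atTop atTop :=
        (tendsto_rpow_atTop (by linarith)).const_mul_atTop hc
      refine tendsto_atTop_mono' _ ?_ h2
      filter_upwards [eventually_ge_atTop x₀, eventually_ge_atTop 1] with x hx hx1
      have hxpos : (0:ℝ) < x := lt_of_lt_of_le one_pos hx1
      calc c * x ^ (β - γ) = x ^ β * (c * x ^ (-γ)) := by
            rw [show β - γ = β + (-γ) by ring, Real.rpow_add hxpos]; ring
        _ ≤ x ^ β * Fbar x := by
            exact mul_le_mul_of_nonneg_left (hlow x hx) (Real.rpow_nonneg hxpos.le β)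
    set M : ℝ := ∫ ω, max (Y ω) 0 ^ β ∂ℙ with hMdef
    have hM0 : 0 ≤ M := integral_nonneg fun ω => Real.rpow_nonneg (le_max_right _ _) _
    have hbound : ∀ᶠ x in atTop, ∫ y in Ioi (x/2), Fbar (x - y) / Fbar x ∂ν
        ≤ (M * 2 ^ β) / (x ^ β * Fbar x) := by
      filter_upwards [eventually_gt_atTop 0] with x hx
      have hx2 : (0:ℝ) < x/2 := by linarith
      -- Markov
      have hmarkov : (ν (Ioi (x/2))).toReal ≤ M / (x/2) ^ β := by
        have hsub : {ω | x/2 < Y ω} ⊆ {ω | (x/2) ^ β ≤ max (Y ω) 0 ^ β} := by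
          intro ω hω
          simp only [mem_setOf_eq] at hω ⊢
          exact Real.rpow_le_rpow hx2.le (le_max_of_le_left hω.le) (by linarith)
        have hmk := mul_meas_ge_le_integral_of_nonneg
          (ae_of_all _ fun ω => Real.rpow_nonneg (le_max_right _ _) β) hmom ((x/2) ^ β)
        have hνeq : ν (Ioi (x/2)) = ℙ {ω | x/2 < Y ω} := by
          rw [hνdef, Measure.map_apply hYm measurableSet_Ioi]; rfl
        have h1 : (ℙ {ω | x/2 < Y ω}).toReal
            ≤ (ℙ {ω | (x/2) ^ β ≤ max (Y ω) 0 ^ β}).toReal :=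
          ENNReal.toReal_mono (measure_ne_top _ _) (measure_mono hsub)
        have hpow : (0:ℝ) < (x/2) ^ β := Real.rpow_pos_of_pos hx2 _
        rw [hνeq]
        rw [le_div_iff₀ hpow]
        calc (ℙ {ω | x/2 < Y ω}).toReal * (x/2) ^ β
            ≤ (ℙ {ω | (x/2) ^ β ≤ max (Y ω) 0 ^ β}).toReal * (x/2) ^ β :=
              mul_le_mul_of_nonneg_right h1 hpow.le
          _ = (x/2) ^ β * (ℙ {ω | (x/2) ^ β ≤ max (Y ω) 0 ^ β}).toReal := by ring
          _ ≤ M := hmk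
      have hstep1 : ∫ y in Ioi (x/2), Fbar (x - y) / Fbar x ∂ν
          ≤ ∫ _ in Ioi (x/2), 1 / Fbar x ∂ν := by
        refine setIntegral_mono_on ((hintD x).integrableOn)
          (integrableOn_const (measure_ne_top _ _)) measurableSet_Ioi ?_
        intro y _
        exact div_le_div_of_le_left' (hFle1 _) (hFpos x)
      have hstep2 : (∫ _ in Ioi (x/2), 1 / Fbar x ∂ν) = (ν (Ioi (x/2))).toReal * (1 / Fbar x) := by
        rw [setIntegral_const]; rfl
      have hstep3 : (ν (Ioi (x/2))).toReal * (1 / Fbar x) ≤ (M / (x/2) ^ β) * (1 / Fbar x) :=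
        mul_le_mul_of_nonneg_right hmarkov (one_div_nonneg.2 (hFpos x).le)
      have hstep4 : (M / (x/2) ^ β) * (1 / Fbar x) = (M * 2 ^ β) / (x ^ β * Fbar x) := by
        rw [Real.div_rpow hx.le (by norm_num : (0:ℝ) ≤ 2)]
        field_simp
      linarith [hstep1, hstep2 ▸ hstep3, hstep4]
    have hdiv : Tendsto (fun x => (M * 2 ^ β) / (x ^ β * Fbar x)) atTop (nhds 0) :=
      Tendsto.div_atTop tendsto_const_nhds hT
    refine squeeze_zero' ?_ hbound hdiv
    filter_upwards with x
    exact setIntegral_nonneg measurableSet_Ioi fun y _ =>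
      div_nonneg (hFnn _) (hFnn _)
  -- assemble
  have hsum : Tendsto (fun x => (∫ y in Iic (x/2), Fbar (x - y) / Fbar x ∂ν)
      + ∫ y in Ioi (x/2), Fbar (x - y) / Fbar x ∂ν) atTop (nhds 1) := by
    simpa using hA.add hB
  refine hsum.congr fun x => ?_
  rw [← compl_Iic, integral_add_compl measurableSet_Iic (hintD x), hkey x, ← integral_div]
end
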